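/- Let κ < λ = cf(λ) with κ⁺ < λ, let I be an ideal on κ, and let ⟨a_α : α < λ⟩ be a sequence of subsets of κ that is strictly increasing modulo I (α < β implies a_α \ a_β ∈ I and a_β \ a_α ∉ I) with κ \ a_α ∉ I for all α, and suppose there is no b ∈ P(κ) \ I with a_α ∩ b ∈ I for all α. Define f_α ∈ ^κOrd by f_α(i) = α if i ∉ a_α and f_α(i) = λ + α if i ∈ a_α. Then the constant function f with value λ + λ is a ≤_I-least upper bound of ⟨f_α : α < λ⟩ but not a ≤_I-exact upper bound of it. -/

import Mathlib

open Cardinal Set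
open scoped Classical

/-- `I` is a (proper) ideal on the index set `ι`. -/
def IsIdealOn {ι : Type} (I : Set (Set ι)) : Prop :=
  ∅ ∈ I ∧ (∀ s t : Set ι, s ⊆ t → t ∈ I → s ∈ I) ∧
    (∀ s t : Set ι, s ∈ I → t ∈ I → s ∪ t ∈ I) ∧ Set.univ ∉ I

/-- `f ≤_I g` : the set where `f` exceeds `g` is in the ideal. -/
def leMod {ι : Type} (I : Set (Set ι)) (f g : ι → Ordinal) : Prop :=
  {i | g i < f i} ∈ I

/-- `f <_I g` : the set where `f ≥ g` is in the ideal. -/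
def ltMod {ι : Type} (I : Set (Set ι)) (f g : ι → Ordinal) : Prop :=
  {i | g i ≤ f i} ∈ I
/-!
Every `f_α` lies pointwise below `λ + λ`. If `f'` is an upper bound and `B = {f' < λ + λ}`
were `I`-positive, then, as `|κ| < cf λ`, the values of `f'` below `λ + λ` are all below a
single `λ + γ` with `γ < λ`. For `α ≥ γ`, `f_α ≤_I f'` then forces `a_α ∩ B ∈ I`, and since
the `a_α` increase modulo `I` this descends to every `α < λ`, so `B` is a forbidden `b`.
The constant `λ` lies below `λ + λ` everywhere, yet `λ <_I max(f_α, 1)` would make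
`κ \ a_α` null, because `max(f_α, 1) ≤ λ` off `a_α`.
-/

open Ordinal

namespace IsIdealOn

variable {ι : Type} {I : Set (Set ι)}

theorem empty_mem (hI : IsIdealOn I) : ∅ ∈ I := hI.1

theorem mono (hI : IsIdealOn I) {s t : Set ι} (hst : s ⊆ t) (ht : t ∈ I) : s ∈ I :=
  hI.2.1 s t hst ht

theorem union_mem (hI : IsIdealOn I) {s t : Set ι} (hs : s ∈ I) (ht : t ∈ I) : s ∪ t ∈ I :=
  hI.2.2.1 s t hs ht

theorem inter_mem_of_diff_mem (hI : IsIdealOn I) {s t b : Set ι} (hst : s \ t ∈ I)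
    (htb : t ∩ b ∈ I) : s ∩ b ∈ I := by
  refine hI.mono (fun i ⟨hs, hb⟩ => ?_) (hI.union_mem hst htb)
  by_cases ht : i ∈ t
  · exact Or.inr ⟨ht, hb⟩
  · exact Or.inl ⟨hs, ht⟩

theorem leMod_of_le (hI : IsIdealOn I) {f g : ι → Ordinal} (h : ∀ i, f i ≤ g i) :
    leMod I f g :=
  hI.mono (fun i hi => (not_lt.2 (h i) hi).elim) hI.empty_mem

theorem ltMod_of_lt (hI : IsIdealOn I) {f g : ι → Ordinal} (h : ∀ i, f i < g i) :
    ltMod I f g :=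
  hI.mono (fun i hi => (not_le.2 (h i) hi).elim) hI.empty_mem

end IsIdealOn

section Ladder

variable {ι : Type} {I : Set (Set ι)}

/-- The paper's `f_α` is `ladder λ a α`. -/
noncomputable def ladder (μ : Ordinal) (a : Ordinal → Set ι) (α : Ordinal) (i : ι) :
    Ordinal :=
  if i ∈ a α then μ + α else α

theorem ladder_lt_add_self {μ α : Ordinal} (a : Ordinal → Set ι) (hα : α < μ) (i : ι) :
    ladder μ a α i < μ + μ := by
  unfold ladder
  split_ifs
  · exact add_lt_add_right hα μ
  · exact hα.trans_le le_self_add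

theorem ladder_of_notMem {μ α : Ordinal} {a : Ordinal → Set ι} {i : ι} (hi : i ∉ a α) :
    ladder μ a α i = α :=
  if_neg hi

theorem exists_lt_ord_forall_lt_add_of_lt_add_ord {lam : Cardinal.{0}} (hreg : lam.IsRegular)
    (hι : #ι < lam) (f : ι → Ordinal) :
    ∃ γ < lam.ord, ∀ i, f i < lam.ord + lam.ord → f i < lam.ord + γ := by
  have hlim := isSuccLimit_ord hreg.aleph0_le
  have hγ : ∀ i, ∃ γ < lam.ord, f i < lam.ord + lam.ord → f i < lam.ord + γ := fun i => by
    by_cases h : f i < lam.ord + lam.ord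
    · obtain ⟨γ, hγ, hfγ⟩ := (lt_add_iff_of_isSuccLimit hlim).1 h
      exact ⟨γ, hγ, fun _ => hfγ⟩
    · exact ⟨0, hlim.pos, fun h' => absurd h' h⟩
  choose γ hγlt hfγ using hγ
  refine ⟨iSup γ, iSup_lt_of_lt_cof (by rwa [hreg.cof_ord]) hγlt, fun i hi => ?_⟩
  exact (hfγ i hi).trans_le (add_le_add_right (Ordinal.le_iSup γ i) _)

theorem inter_setOf_lt_add_self_mem_of_leMod (hI : IsIdealOn I) {μ α γ : Ordinal}
    {a : Ordinal → Set ι} {f : ι → Ordinal} (hf : leMod I (ladder μ a α) f)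
    (hfγ : ∀ i, f i < μ + μ → f i < μ + γ) (hγα : γ ≤ α) :
    a α ∩ {i | f i < μ + μ} ∈ I := by
  refine hI.mono (fun i ⟨hia, hi⟩ => ?_) hf
  change f i < ladder μ a α i
  rw [ladder, if_pos hia]
  exact (hfγ i hi).trans_le (add_le_add_right hγα μ)

theorem forall_inter_setOf_lt_add_self_mem (hI : IsIdealOn I) {lam : Cardinal.{0}}
    (hreg : lam.IsRegular) (hι : #ι < lam) {a : Ordinal → Set ι}
    (hdiff : ∀ α β, α < lam.ord → β < lam.ord → α < β → a α \ a β ∈ I)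
    {f : ι → Ordinal}
    (hf : ∀ α < lam.ord, leMod I (ladder lam.ord a α) f) :
    ∀ α < lam.ord, a α ∩ {i | f i < lam.ord + lam.ord} ∈ I := by
  obtain ⟨γ, hγ, hfγ⟩ := exists_lt_ord_forall_lt_add_of_lt_add_ord hreg hι f
  have hbeyond : ∀ α < lam.ord, γ ≤ α → a α ∩ {i | f i < lam.ord + lam.ord} ∈ I :=
    fun α hα hγα => inter_setOf_lt_add_self_mem_of_leMod hI (hf α hα) hfγ hγα
  intro α hα
  rcases le_or_gt γ α with hγα | hαγ
  · exact hbeyond α hα hγα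
  · exact hI.inter_mem_of_diff_mem (hdiff α γ hα hγ hαγ) (hbeyond γ hγ le_rfl)

theorem compl_mem_of_ltMod_max_ladder (hI : IsIdealOn I) {μ α : Ordinal}
    {a : Ordinal → Set ι} (hα : α < μ)
    (h : ltMod I (fun _ => μ) (fun i => max (ladder μ a α i) 1)) :
    (a α)ᶜ ∈ I := by
  refine hI.mono (fun i hi => ?_) h
  change max (ladder μ a α i) 1 ≤ μ
  rw [ladder_of_notMem hi]
  exact max_le hα.le (Order.one_le_iff_pos.2 (zero_le.trans_lt hα))

end Ladder

/-- the example distinguishing l.u.b. from e.u.b.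
With `f_α(i) = λ + α` on `a_α` and `α` off `a_α`, the constant function
`λ + λ` is a `≤_I`-least upper bound but not a `≤_I`-exact upper bound. -/
theorem lub_not_eub_example {ι : Type} (I : Set (Set ι)) (hI : IsIdealOn I)
    (lam : Cardinal.{0}) (hreg : lam.IsRegular)
    (hk : Order.succ (#ι) < lam)
    (a : Ordinal → Set ι)
    (hinc : ∀ α β, α < lam.ord → β < lam.ord → α < β →
      a α \ a β ∈ I ∧ a β \ a α ∉ I)
    (hco : ∀ α < lam.ord, (a α)ᶜ ∉ I)
    (hnob : ¬ ∃ b : Set ι, b ∉ I ∧ ∀ α < lam.ord, a α ∩ b ∈ I) :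
    ((∀ α < lam.ord,
        leMod I (fun i => if i ∈ a α then lam.ord + α else α)
          (fun _ => lam.ord + lam.ord)) ∧
      (∀ f' : ι → Ordinal,
        (∀ α < lam.ord,
          leMod I (fun i => if i ∈ a α then lam.ord + α else α) f') →
        leMod I (fun _ => lam.ord + lam.ord) f')) ∧
    ¬ ((∀ α < lam.ord,
        leMod I (fun i => if i ∈ a α then lam.ord + α else α)
          (fun _ => lam.ord + lam.ord)) ∧
      (∀ f' : ι → Ordinal,
        ltMod I f' (fun _ => max (lam.ord + lam.ord) 1) →
        ∃ α < lam.ord, ltMod I f'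
          (fun i => max (if i ∈ a α then lam.ord + α else α) 1))) := by
  have hι : #ι < lam := (Order.lt_succ _).trans hk
  have hpos : 0 < lam.ord := (isSuccLimit_ord hreg.aleph0_le).pos
  have hub : ∀ α < lam.ord, leMod I (ladder lam.ord a α) (fun _ => lam.ord + lam.ord) :=
    fun α hα => hI.leMod_of_le fun i => (ladder_lt_add_self a hα i).le
  refine ⟨⟨hub, fun f' hf' => ?_⟩, ?_⟩
  · by_contra hB
    exact hnob ⟨_, hB, forall_inter_setOf_lt_add_self_mem hI hreg hι
      (fun α β hα hβ hαβ => (hinc α β hα hβ hαβ).1) hf'⟩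
  · rintro ⟨-, heub⟩
    obtain ⟨α, hα, hlt⟩ := heub (fun _ => lam.ord)
      (hI.ltMod_of_lt fun _ => lt_max_of_lt_left (lt_add_of_pos_right _ hpos))
    exact hco α hα (compl_mem_of_ltMod_max_ladder hI hα hlt)
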